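/- Local L∞ estimate for Lane–Emden subsolutions (N = 1): let λ > 0, let 1 ≤ q < 2, let Ω ⊆ ℝ be open, and let u : Ω → ℝ be twice continuously differentiable and positive on Ω with −u''(x) ≤ λ·u(x)^{q−1} for all x ∈ Ω. Then for every x₀ ∈ ℝ and R₀ > 0 with the closed interval [x₀ − R₀, x₀ + R₀] contained in Ω, and every α ≥ 2, one has sup over (x₀ − R₀/2, x₀ + R₀/2) of u ≤ 8√5 · [ ( (1/(2R₀)) ∫_{x₀−R₀}^{x₀+R₀} u^α dx )^{1/α} + (λ/4)^{1/(2−q)} · R₀^{2/(2−q)} ]. -/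

import Mathlib

/-!
Where `-u'' ≤ K` on `[x - r, x + r]`, the function `u + K (y - x)² / 2` is convex, so `u x` is at
most the mean of `u` over that interval plus `K r² / 6` (Hermite–Hadamard). With `K = λ S^(q-1)`,
`S` the supremum of `u` on a larger interval of radius `s = t + r`, Jensen bounds the mean by the
`L^α` mean over `[x₀ - R₀, x₀ + R₀]` times `√(R₀ / r)`, and Young's inequality absorbs
`λ S^(q-1) r² / 6` into `S / 2` plus the scaling term. The resulting inequality between the
suprema over the radii `t < s` is iterated along `tₙ = R₀ - R₀ / 2^(n+1)`: the factor `1/2` beats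
the growth `√2^n` of the first term, and both geometric series converge.
-/

open MeasureTheory Set Filter Topology
open scoped Interval

theorem mul_rpow_le_half_add {θ c S : ℝ} (hθ0 : 0 ≤ θ) (hθ1 : θ < 1) (hc : 0 ≤ c) (hS : 0 ≤ S) :
    c * S ^ θ ≤ S / 2 + (2 * c) ^ (1 / (1 - θ)) := by
  have h1θ : 0 < 1 - θ := by linarith
  have hY : ((2 * c) ^ (1 / (1 - θ))) ^ (1 - θ) = 2 * c := by
    rw [← Real.rpow_mul (by positivity), one_div_mul_cancel h1θ.ne', Real.rpow_one]
  have h2θ : (2 : ℝ) ^ θ ≤ 2 := by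
    simpa using Real.rpow_le_rpow_of_exponent_le (by norm_num : (1 : ℝ) ≤ 2) hθ1.le
  have amgm := Real.geom_mean_le_arith_mean2_weighted hθ0 h1θ.le (by positivity : 0 ≤ S / 2)
    (by positivity : 0 ≤ (2 * c) ^ (1 / (1 - θ))) (by ring)
  rw [hY, Real.div_rpow hS zero_le_two] at amgm
  calc c * S ^ θ = S ^ θ / 2 ^ θ * (2 ^ θ * c) := by
        field_simp
    _ ≤ S ^ θ / 2 ^ θ * (2 * c) := by gcongr
    _ ≤ θ * (S / 2) + (1 - θ) * (2 * c) ^ (1 / (1 - θ)) := amgm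
    _ ≤ S / 2 + (2 * c) ^ (1 / (1 - θ)) := by
        have : 0 ≤ (2 * c) ^ (1 / (1 - θ)) := by positivity
        nlinarith

theorem ConvexOn.map_midpoint_le_intervalAverage {v : ℝ → ℝ} {a b : ℝ} (hab : a < b)
    (hv : ConvexOn ℝ (Icc a b) v) (hvc : ContinuousOn v (Icc a b)) :
    v ((a + b) / 2) ≤ ⨍ x in a..b, v x := by
  have hmean : ⨍ x in a..b, x = (a + b) / 2 := by
    rw [interval_average_eq, integral_id, smul_eq_mul]
    field_simp [(sub_pos.2 hab).ne']
    ring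
  have hvol : volume (Ι a b) ≠ 0 := by simp [uIoc_of_le hab.le, hab]
  have hIoc : Ι a b ⊆ Icc a b := by rw [uIoc_of_le hab.le]; exact Ioc_subset_Icc_self
  have := hv.map_set_average_le (f := fun x => x) hvc isClosed_Icc hvol
    (by simp [uIoc_of_le hab.le])
    (by filter_upwards [ae_restrict_mem measurableSet_uIoc] with x hx using hIoc hx)
    (continuous_id.continuousOn.integrableOn_Icc.mono_set hIoc)
    (hvc.integrableOn_Icc.mono_set hIoc)
  rwa [hmean] at this

theorem intervalAverage_sub_sq (c r : ℝ) (hr : 0 < r) :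
    ⨍ x in (c - r)..(c + r), (x - c) ^ 2 = r ^ 2 / 3 := by
  rw [interval_average_eq, intervalIntegral.integral_comp_sub_right (fun x => x ^ 2),
    integral_pow, smul_eq_mul]
  field_simp
  ring_nf
  field_simp

theorem le_intervalAverage_add_of_neg_deriv_deriv_le {U : Set ℝ} (hU : IsOpen U) {u : ℝ → ℝ}
    (hu : ContDiffOn ℝ 2 u U) {c r K : ℝ} (hr : 0 < r) (hsub : Icc (c - r) (c + r) ⊆ U)
    (hK : ∀ y ∈ Icc (c - r) (c + r), -deriv (deriv u) y ≤ K) :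
    u c ≤ (⨍ x in (c - r)..(c + r), u x) + K * r ^ 2 / 6 := by
  have hu' : ∀ y ∈ U, HasDerivAt u (deriv u y) y := fun y hy =>
    ((hu.differentiableOn two_ne_zero).differentiableAt (hU.mem_nhds hy)).hasDerivAt
  have hu'' : ∀ y ∈ U, HasDerivAt (deriv u) (deriv (deriv u) y) y := fun y hy =>
    (((hu.deriv_of_isOpen hU one_add_one_eq_two.le).differentiableOn one_ne_zero).differentiableAt
      (hU.mem_nhds hy)).hasDerivAt
  have hint : interior (Icc (c - r) (c + r)) ⊆ U := interior_subset.trans hsub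
  have hcont : ContinuousOn (fun y => u y + K / 2 * (y - c) ^ 2) (Icc (c - r) (c + r)) :=
    (hu.continuousOn.mono hsub).add (by fun_prop)
  have hconv : ConvexOn ℝ (Icc (c - r) (c + r)) fun y => u y + K / 2 * (y - c) ^ 2 := by
    refine convexOn_of_hasDerivWithinAt2_nonneg (convex_Icc _ _) hcont
      (f' := fun y => deriv u y + K * (y - c)) (f'' := fun y => deriv (deriv u) y + K)
      (fun y hy => ?_) (fun y hy => ?_) (fun y hy => ?_)
    · refine ((hu' y (hint hy)).add ?_).hasDerivWithinAt
      exact ((((hasDerivAt_id y).sub_const c).pow 2).const_mul (K / 2)).congr_deriv (by simp; ring)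
    · refine ((hu'' y (hint hy)).add ?_).hasDerivWithinAt
      simpa using ((hasDerivAt_id y).sub_const c).const_mul K
    · linarith [hK y (interior_subset hy)]
  have hmid := hconv.map_midpoint_le_intervalAverage (by linarith) hcont
  have hint_u : IntervalIntegrable u volume (c - r) (c + r) :=
    (hu.continuousOn.mono hsub).intervalIntegrable_of_Icc (by linarith)
  have hint_q : IntervalIntegrable (fun y => K / 2 * (y - c) ^ 2) volume (c - r) (c + r) := by
    apply Continuous.intervalIntegrable; fun_prop
  have havg : ⨍ x in (c - r)..(c + r), (u x + K / 2 * (x - c) ^ 2)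
      = (⨍ x in (c - r)..(c + r), u x) + K / 2 * (r ^ 2 / 3) := by
    rw [← intervalAverage_sub_sq c r hr, interval_average_eq, interval_average_eq,
      interval_average_eq, intervalIntegral.integral_add hint_u hint_q,
      intervalIntegral.integral_const_mul]
    simp only [smul_eq_mul]
    ring
  rw [show (c - r + (c + r)) / 2 = c by ring, havg, sub_self] at hmid
  linarith [zero_pow (M₀ := ℝ) two_ne_zero]

theorem intervalAverage_nonneg {f : ℝ → ℝ} {a b : ℝ} (hab : a ≤ b)
    (hf0 : ∀ x ∈ Icc a b, 0 ≤ f x) : 0 ≤ ⨍ x in a..b, f x := by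
  rw [interval_average_eq, smul_eq_mul]
  exact mul_nonneg (inv_nonneg.2 (sub_nonneg.2 hab)) (intervalIntegral.integral_nonneg hab hf0)

theorem intervalAverage_le_rpow_intervalAverage_rpow {u : ℝ → ℝ} {a b p : ℝ} (hab : a < b)
    (hp : 1 ≤ p) (hu : ContinuousOn u (Icc a b)) (hu0 : ∀ x ∈ Icc a b, 0 ≤ u x) :
    ⨍ x in a..b, u x ≤ (⨍ x in a..b, u x ^ p) ^ (1 / p) := by
  have hp0 : 0 < p := by linarith
  have hIoc : Ι a b ⊆ Icc a b := by rw [uIoc_of_le hab.le]; exact Ioc_subset_Icc_self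
  have hvol : volume (Ι a b) ≠ 0 := by simp [uIoc_of_le hab.le, hab]
  have havg0 : 0 ≤ ⨍ x in a..b, u x := intervalAverage_nonneg hab.le hu0
  have jensen := (convexOn_rpow hp).map_set_average_le
    (fun x _ => (Real.continuousAt_rpow_const x p (Or.inr hp0.le)).continuousWithinAt)
    isClosed_Ici hvol (by simp [uIoc_of_le hab.le])
    (by filter_upwards [ae_restrict_mem measurableSet_uIoc] with x hx using hu0 x (hIoc hx))
    (hu.integrableOn_Icc.mono_set hIoc)
    ((hu.rpow_const fun _ _ => Or.inr hp0.le).integrableOn_Icc.mono_set hIoc)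
  calc ⨍ x in a..b, u x = ((⨍ x in a..b, u x) ^ p) ^ (1 / p) := by
        rw [← Real.rpow_mul havg0, mul_one_div_cancel hp0.ne', Real.rpow_one]
    _ ≤ (⨍ x in a..b, u x ^ p) ^ (1 / p) := by gcongr

theorem intervalAverage_le_of_subset {f : ℝ → ℝ} {a b a' b' : ℝ} (hab : a < b) (ha : a' ≤ a)
    (hb : b ≤ b') (hf : IntervalIntegrable f volume a' b') (hf0 : ∀ x ∈ Icc a' b', 0 ≤ f x) :
    ⨍ x in a..b, f x ≤ (b' - a') / (b - a) * ⨍ x in a'..b', f x := by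
  have hab' : a' < b' := by linarith
  have hcoef : (b' - a') / (b - a) * (b' - a')⁻¹ = (b - a)⁻¹ := by
    field_simp [(sub_pos.2 hab').ne']
  rw [interval_average_eq, interval_average_eq, smul_eq_mul, smul_eq_mul, ← mul_assoc, hcoef]
  refine mul_le_mul_of_nonneg_left (intervalIntegral.integral_mono_interval ha hab.le hb ?_ hf)
    (inv_nonneg.2 (sub_pos.2 hab).le)
  filter_upwards [ae_restrict_mem measurableSet_Ioc] with x hx using hf0 x (Ioc_subset_Icc_self hx)

theorem intervalAverage_le_sqrt_mul_rpow_intervalAverage_rpow {f : ℝ → ℝ} {a b a' b' p : ℝ}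
    (hab : a < b) (ha : a' ≤ a) (hb : b ≤ b') (hp : 2 ≤ p) (hf : ContinuousOn f (Icc a' b'))
    (hf0 : ∀ x ∈ Icc a' b', 0 ≤ f x) :
    ⨍ x in a..b, f x ≤ √((b' - a') / (b - a)) * (⨍ x in a'..b', f x ^ p) ^ (1 / p) := by
  have hp0 : 0 < p := by linarith
  have hsub : Icc a b ⊆ Icc a' b' := Icc_subset_Icc ha hb
  have hratio : 1 ≤ (b' - a') / (b - a) := (one_le_div (sub_pos.2 hab)).2 (by linarith)
  have hfp : ContinuousOn (fun x => f x ^ p) (Icc a' b') := hf.rpow_const fun _ _ => Or.inr hp0.le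
  have hfp0 : ∀ x ∈ Icc a' b', 0 ≤ f x ^ p := fun x hx => Real.rpow_nonneg (hf0 x hx) p
  have havg0 : 0 ≤ ⨍ x in a'..b', f x ^ p := intervalAverage_nonneg (by linarith) hfp0
  calc ⨍ x in a..b, f x ≤ (⨍ x in a..b, f x ^ p) ^ (1 / p) :=
        intervalAverage_le_rpow_intervalAverage_rpow hab (by linarith) (hf.mono hsub)
          fun x hx => hf0 x (hsub hx)
    _ ≤ ((b' - a') / (b - a) * ⨍ x in a'..b', f x ^ p) ^ (1 / p) := by
        gcongr
        · exact intervalAverage_nonneg hab.le fun x hx => hfp0 x (hsub hx)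
        · exact intervalAverage_le_of_subset hab ha hb (hfp.intervalIntegrable_of_Icc (by linarith))
            hfp0
    _ = ((b' - a') / (b - a)) ^ (1 / p) * (⨍ x in a'..b', f x ^ p) ^ (1 / p) :=
        Real.mul_rpow (by linarith) havg0
    _ ≤ √((b' - a') / (b - a)) * (⨍ x in a'..b', f x ^ p) ^ (1 / p) := by
        rw [Real.sqrt_eq_rpow]
        gcongr

theorem le_geom_sum_add_of_le_half_succ {g a : ℕ → ℝ} (h : ∀ n, g n ≤ g (n + 1) / 2 + a n)
    (n : ℕ) : g 0 ≤ ∑ k ∈ Finset.range n, (1 / 2 : ℝ) ^ k * a k + (1 / 2) ^ n * g n := by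
  induction n with
  | zero => simp
  | succ n ih =>
    calc g 0 ≤ ∑ k ∈ Finset.range n, (1 / 2 : ℝ) ^ k * a k + (1 / 2) ^ n * g n := ih
      _ ≤ ∑ k ∈ Finset.range n, (1 / 2 : ℝ) ^ k * a k + (1 / 2) ^ n * (g (n + 1) / 2 + a n) := by
        gcongr; exact h n
      _ = _ := by rw [Finset.sum_range_succ]; ring

theorem sum_half_pow_mul_le {A B : ℝ} (hA : 0 ≤ A) (hB : 0 ≤ B) (n : ℕ) :
    ∑ k ∈ Finset.range n, (1 / 2 : ℝ) ^ k * (√2 ^ (k + 1) * A + B) ≤ 5 * A + 2 * B := by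
  have hgeom : ∀ x : ℝ, 0 ≤ x → x < 1 → ∑ k ∈ Finset.range n, x ^ k ≤ (1 - x)⁻¹ := by
    intro x hx0 hx1
    simpa [← Finset.range_eq_Ico] using geom_sum_Ico_le_of_lt_one (m := 0) (n := n) hx0 hx1
  have hlt : √2 / 2 < 1 := by linarith [Real.sqrt_two_lt_three_halves]
  have hsqrt : ∑ k ∈ Finset.range n, (1 / 2 : ℝ) ^ k * √2 ^ (k + 1) ≤ 5 := by
    calc ∑ k ∈ Finset.range n, (1 / 2 : ℝ) ^ k * √2 ^ (k + 1)
        = √2 * ∑ k ∈ Finset.range n, (√2 / 2) ^ k := by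
          rw [Finset.mul_sum]
          exact Finset.sum_congr rfl fun k _ => by rw [div_pow, div_pow, one_pow, pow_succ]; ring
      _ ≤ √2 * (1 - √2 / 2)⁻¹ := by gcongr; exact hgeom _ (by positivity) hlt
      _ ≤ 5 := by
        rw [← div_eq_mul_inv, div_le_iff₀ (by linarith)]
        nlinarith [Real.sq_sqrt (zero_le_two (α := ℝ)), Real.sqrt_nonneg 2]
  have hhalf : ∑ k ∈ Finset.range n, (1 / 2 : ℝ) ^ k ≤ 2 := by
    have := hgeom (1 / 2) (by norm_num) (by norm_num)
    norm_num at this ⊢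
    exact this
  simp only [mul_add, Finset.sum_add_distrib, ← mul_assoc, ← Finset.sum_mul]
  gcongr

theorem le_of_le_sqrt_mul_add_half_add {f : ℝ → ℝ} {ρ R A B M : ℝ} (hρR : ρ < R) (hA : 0 ≤ A)
    (hB : 0 ≤ B) (hM : ∀ t ∈ Icc ρ R, f t ≤ M)
    (hstep : ∀ t s, ρ ≤ t → t < s → s ≤ R → f t ≤ √((R - ρ) / (s - t)) * A + f s / 2 + B) :
    f ρ ≤ 5 * A + 2 * B := by
  set t : ℕ → ℝ := fun n => R - (R - ρ) / 2 ^ n with ht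
  have hδ : 0 < R - ρ := sub_pos.2 hρR
  have ht_mem : ∀ n, t n ∈ Icc ρ R := fun n => by
    have : (R - ρ) / 2 ^ n ≤ R - ρ := div_le_self hδ.le (one_le_pow₀ one_le_two)
    constructor <;> simp only [ht] <;> linarith [div_pos hδ (pow_pos two_pos n)]
  have hgap : ∀ n, t (n + 1) - t n = (R - ρ) / 2 ^ (n + 1) := fun n => by
    simp only [ht]; field_simp; ring
  have hrec : ∀ n, f (t n) ≤ f (t (n + 1)) / 2 + (√2 ^ (n + 1) * A + B) := fun n => by
    have hsqrt : √((R - ρ) / (t (n + 1) - t n)) = √2 ^ (n + 1) := by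
      rw [hgap, div_div_cancel₀ hδ.ne', ← Real.sqrt_sq (pow_nonneg (Real.sqrt_nonneg 2) _),
        ← pow_mul, mul_comm, pow_mul, Real.sq_sqrt zero_le_two]
    have hlt : t n < t (n + 1) := by linarith [hgap n, div_pos hδ (pow_pos two_pos (n + 1))]
    have := hstep (t n) (t (n + 1)) (ht_mem n).1 hlt (ht_mem (n + 1)).2
    rw [hsqrt] at this
    linarith
  have hbound : ∀ n, f ρ ≤ 5 * A + 2 * B + (1 / 2) ^ n * M := fun n => by
    have hiter := le_geom_sum_add_of_le_half_succ hrec n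
    have htail : (1 / 2 : ℝ) ^ n * f (t n) ≤ (1 / 2) ^ n * M := by gcongr; exact hM _ (ht_mem n)
    simp only [ht, pow_zero, div_one, sub_sub_cancel] at hiter
    linarith [sum_half_pow_mul_le hA hB n]
  have hlim : Tendsto (fun n : ℕ => 5 * A + 2 * B + (1 / 2 : ℝ) ^ n * M) atTop
      (𝓝 (5 * A + 2 * B)) := by
    simpa using (tendsto_pow_atTop_nhds_zero_of_lt_one (by norm_num : (0 : ℝ) ≤ 1 / 2)
      (by norm_num)).mul_const M |>.const_add (5 * A + 2 * B)
  exact ge_of_tendsto' hlim hbound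

theorem le_sqrt_mul_add_half_add_of_subsolution {lam q : ℝ} {Ω : Set ℝ} {u : ℝ → ℝ}
    (hlam : 0 ≤ lam) (hq1 : 1 ≤ q) (hq2 : q < 2) (hΩ : IsOpen Ω) (hu : ContDiffOn ℝ 2 u Ω)
    (hu0 : ∀ x ∈ Ω, 0 ≤ u x) (hsub : ∀ x ∈ Ω, -(deriv (deriv u) x) ≤ lam * u x ^ (q - 1))
    {x₀ R₀ α t s S x : ℝ} (hIcc : Icc (x₀ - R₀) (x₀ + R₀) ⊆ Ω) (hα : 2 ≤ α) (ht : R₀ / 2 ≤ t)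
    (hts : t < s) (hs : s ≤ R₀) (hS : ∀ y ∈ Icc (x₀ - s) (x₀ + s), u y ≤ S)
    (hx : x ∈ Icc (x₀ - t) (x₀ + t)) :
    u x ≤ √(R₀ / (s - t)) * (⨍ y in (x₀ - R₀)..(x₀ + R₀), u y ^ α) ^ (1 / α) + S / 2
      + (lam / 4) ^ (1 / (2 - q)) * R₀ ^ (2 / (2 - q)) := by
  set r := s - t
  have hr : 0 < r := sub_pos.2 hts
  have hball : Icc (x - r) (x + r) ⊆ Icc (x₀ - s) (x₀ + s) :=
    Icc_subset_Icc (by linarith [hx.1]) (by linarith [hx.2])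
  have hsR : Icc (x₀ - s) (x₀ + s) ⊆ Icc (x₀ - R₀) (x₀ + R₀) :=
    Icc_subset_Icc (by linarith) (by linarith)
  have hx_mem : x ∈ Icc (x - r) (x + r) := ⟨by linarith, by linarith⟩
  have hS0 : 0 ≤ S := (hu0 x (hIcc (hsR (hball hx_mem)))).trans (hS x (hball hx_mem))
  have hK : ∀ y ∈ Icc (x - r) (x + r), -deriv (deriv u) y ≤ lam * S ^ (q - 1) := fun y hy => by
    have hyΩ := hIcc (hsR (hball hy))
    exact (hsub y hyΩ).trans <| mul_le_mul_of_nonneg_left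
      (Real.rpow_le_rpow (hu0 y hyΩ) (hS y (hball hy)) (by linarith)) hlam
  have hmean := le_intervalAverage_add_of_neg_deriv_deriv_le hΩ hu hr
    ((hball.trans hsR).trans hIcc) hK
  have hend : Icc (x - r) (x + r) ⊆ Icc (x₀ - R₀) (x₀ + R₀) := hball.trans hsR
  have havg := intervalAverage_le_sqrt_mul_rpow_intervalAverage_rpow (f := u) (by linarith)
    (hend ⟨le_rfl, by linarith⟩).1 (hend ⟨by linarith, le_rfl⟩).2 hα (hu.continuousOn.mono hIcc)
    fun y hy => hu0 y (hIcc hy)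
  have hratio : (x₀ + R₀ - (x₀ - R₀)) / (x + r - (x - r)) = R₀ / r := by
    rw [show x + r - (x - r) = 2 * r by ring, show x₀ + R₀ - (x₀ - R₀) = 2 * R₀ by ring,
      mul_div_mul_left _ _ two_ne_zero]
  rw [hratio] at havg
  have habs := mul_rpow_le_half_add (θ := q - 1) (c := lam * r ^ 2 / 6) (by linarith)
    (by linarith) (by positivity) hS0
  have hscale : (2 * (lam * r ^ 2 / 6)) ^ (1 / (1 - (q - 1)))
      ≤ (lam / 4) ^ (1 / (2 - q)) * R₀ ^ (2 / (2 - q)) := by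
    have hexp : 0 ≤ 1 / (2 - q) := one_div_nonneg.2 (by linarith)
    have hR₀ : 0 ≤ R₀ := by linarith
    rw [show 1 - (q - 1) = 2 - q by ring, show 2 / (2 - q) = (2 : ℕ) * (1 / (2 - q)) by
      push_cast; ring, Real.rpow_mul hR₀, Real.rpow_natCast, ← Real.mul_rpow (by positivity)
      (by positivity)]
    refine Real.rpow_le_rpow (by positivity) ?_ hexp
    have hr2 : lam * r ^ 2 ≤ lam * (R₀ ^ 2 / 4) := by gcongr; nlinarith
    nlinarith [sq_nonneg R₀]
  linarith

theorem sSup_le_sqrt_mul_add_half_sSup_add_of_subsolution {lam q : ℝ} {Ω : Set ℝ} {u : ℝ → ℝ}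
    (hlam : 0 ≤ lam) (hq1 : 1 ≤ q) (hq2 : q < 2) (hΩ : IsOpen Ω) (hu : ContDiffOn ℝ 2 u Ω)
    (hu0 : ∀ x ∈ Ω, 0 ≤ u x) (hsub : ∀ x ∈ Ω, -(deriv (deriv u) x) ≤ lam * u x ^ (q - 1))
    {x₀ R₀ α t s : ℝ} (hIcc : Icc (x₀ - R₀) (x₀ + R₀) ⊆ Ω) (hα : 2 ≤ α) (ht : R₀ / 2 ≤ t)
    (hts : t < s) (hs : s ≤ R₀) :
    sSup (u '' Icc (x₀ - t) (x₀ + t))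
      ≤ √((R₀ - R₀ / 2) / (s - t)) * (√2 * (⨍ y in (x₀ - R₀)..(x₀ + R₀), u y ^ α) ^ (1 / α))
        + sSup (u '' Icc (x₀ - s) (x₀ + s)) / 2
        + (lam / 4) ^ (1 / (2 - q)) * R₀ ^ (2 / (2 - q)) := by
  have hsqrt : √(R₀ / (s - t)) = √((R₀ - R₀ / 2) / (s - t)) * √2 := by
    rw [← Real.sqrt_mul (div_nonneg (by linarith) (by linarith))]
    ring_nf
  have hS : ∀ y ∈ Icc (x₀ - s) (x₀ + s), u y ≤ sSup (u '' Icc (x₀ - s) (x₀ + s)) :=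
    fun y hy => (hu.continuousOn.mono
      ((Icc_subset_Icc (by linarith) (by linarith)).trans hIcc)).le_sSup_image_Icc hy
  refine csSup_le ((nonempty_Icc.2 (by linarith)).image u) ?_
  rintro _ ⟨x, hx, rfl⟩
  have := le_sqrt_mul_add_half_add_of_subsolution hlam hq1 hq2 hΩ hu hu0 hsub hIcc hα ht hts
    hs hS hx
  rw [hsqrt] at this
  linarith

theorem local_Linfty_estimate_dim_one
    {lam q : ℝ} (hlam : 0 < lam) (hq1 : 1 ≤ q) (hq2 : q < 2)
    {Ω : Set ℝ} (hΩ : IsOpen Ω)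
    {u : ℝ → ℝ} (hu : ContDiffOn ℝ 2 u Ω) (hupos : ∀ x ∈ Ω, 0 < u x)
    (hsub : ∀ x ∈ Ω, -(deriv (deriv u) x) ≤ lam * u x ^ (q - 1))
    (x₀ : ℝ) {R₀ : ℝ} (hR₀ : 0 < R₀) (hIcc : Set.Icc (x₀ - R₀) (x₀ + R₀) ⊆ Ω)
    {α : ℝ} (hα : 2 ≤ α) :
    ∀ x ∈ Set.Ioo (x₀ - R₀ / 2) (x₀ + R₀ / 2),
      u x ≤ 8 * Real.sqrt 5
        * (((1 / (2 * R₀)) * ∫ y in (x₀ - R₀)..(x₀ + R₀), u y ^ α) ^ (1 / α)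
            + (lam / 4) ^ (1 / (2 - q)) * R₀ ^ (2 / (2 - q))) := by
  intro x hx
  have hu0 : ∀ x ∈ Ω, 0 ≤ u x := fun x hx => (hupos x hx).le
  have hucont : ContinuousOn u (Icc (x₀ - R₀) (x₀ + R₀)) := hu.continuousOn.mono hIcc
  set A := (⨍ y in (x₀ - R₀)..(x₀ + R₀), u y ^ α) ^ (1 / α) with hA_def
  set B := (lam / 4) ^ (1 / (2 - q)) * R₀ ^ (2 / (2 - q))
  have hA : 0 ≤ A := Real.rpow_nonneg (intervalAverage_nonneg (by linarith)
    fun y hy => Real.rpow_nonneg (hu0 y (hIcc hy)) α) _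
  have hB : 0 ≤ B := by positivity
  have hM : ∀ t ∈ Icc (R₀ / 2) R₀,
      sSup (u '' Icc (x₀ - t) (x₀ + t)) ≤ sSup (u '' Icc (x₀ - R₀) (x₀ + R₀)) := fun t ht =>
    csSup_le ((nonempty_Icc.2 (by linarith [ht.1])).image u) <| forall_mem_image.2 fun y hy =>
      hucont.le_sSup_image_Icc (Icc_subset_Icc (by linarith [ht.2]) (by linarith [ht.2]) hy)
  have hsup := le_of_le_sqrt_mul_add_half_add (f := fun t => sSup (u '' Icc (x₀ - t) (x₀ + t)))
    (by linarith) (by positivity) hB hM fun t s ht hts hs =>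
      sSup_le_sqrt_mul_add_half_sSup_add_of_subsolution hlam.le hq1 hq2 hΩ hu hu0 hsub hIcc hα ht
        hts hs
  have hux : u x ≤ sSup (u '' Icc (x₀ - R₀ / 2) (x₀ + R₀ / 2)) :=
    (hucont.mono (Icc_subset_Icc (by linarith) (by linarith))).le_sSup_image_Icc
      ⟨hx.1.le, hx.2.le⟩
  rw [one_div_mul_eq_div, ← show x₀ + R₀ - (x₀ - R₀) = 2 * R₀ by ring, ← interval_average_eq_div,
    ← hA_def]
  have h25 : √2 ≤ √5 := Real.sqrt_le_sqrt (by norm_num)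
  have h15 : 1 ≤ √5 := Real.one_le_sqrt.2 (by norm_num)
  nlinarith [mul_le_mul_of_nonneg_right h25 hA, mul_le_mul_of_nonneg_right h15 hB,
    mul_nonneg (Real.sqrt_nonneg 2) hA]
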